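/- arXiv:1312.7420 — 4 statements merged into one kernel-verified Lean document; each statement's English description precedes it below -/
import Mathlib

section
/- Fix integers d ≥ 1, n ≥ 1, 1 ≤ m ≤ n and a composition (k_0, …, k_{d−1}) of n, i.e. nonnegative integers with k_0 + … + k_{d−1} = n. Let Q be the marginal on the first m coordinates of the uniform distribution on the type class T(k_0,…,k_{d−1}) ⊆ {0,…,d−1}^n, and let γ be the probability distribution on {0,…,d−1} with γ(j) = k_j/n. Then ∑_{x ∈ {0,…,d−1}^m} |Q(x) − ∏_{i=1}^m γ(x_i)| ≤ 2dm/n. -/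
open scoped BigOperators

/-- The number of occurrences of the symbol `j` in a string `s ∈ {0,…,d-1}^k`. -/
def symbolCount {k d : ℕ} (s : Fin k → Fin d) (j : Fin d) : ℕ :=
  (Finset.univ.filter fun i => s i = j).card

/-!
Write `Q_i` for the law of the first `i` letters of a uniform string of the type class and
`P_i = γ^⊗i`. Given a prefix `x`, the next letter is `b` with probability `(k_b - #_b x)/(n - i)`
(swap two positions and double count), so the chain rule splits `KL(Q_m ‖ P_m)` into the expected
divergences of these conditional laws from `γ`. Each is at most a χ² divergence, whose expectation
only involves the first two factorial moments of the remaining counts `k_b - #_b x`; as in sampling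
without replacement they give `(d - 1) i / ((n - 1)(n - i))` at step `i`, hence
`KL(Q_m ‖ P_m) ≤ (d - 1) m² / ((n - 1)(n - m))`. Pinsker's inequality turns this into the bound when
`dm < n`; otherwise the `ℓ¹` distance is at most `2 ≤ 2dm/n`.
-/

open Finset Real

section DiscreteKL

variable {α β : Type*} [Fintype α] [Fintype β]

-- As `log 0 = 0`, a term with `p x = 0 ≠ q x` vanishes instead of being infinite: the lemmas
-- below assume `q x ≠ 0 → p x ≠ 0`.
noncomputable def discreteKL (q p : α → ℝ) : ℝ := ∑ x, q x * log (q x / p x)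

lemma sq_sqrt_sub_sqrt_le {q p : ℝ} (hq : 0 ≤ q) (hp : 0 ≤ p) (hqp : q ≠ 0 → p ≠ 0) :
    (√q - √p) ^ 2 ≤ q * log (q / p) - q + p := by
  rcases hq.eq_or_lt with rfl | hq
  · simp [sq_sqrt hp]
  have ha : 0 < √q := sqrt_pos.2 hq
  have hb : 0 < √p := sqrt_pos.2 (hp.lt_of_ne' (hqp hq.ne'))
  have hq2 : √q ^ 2 = q := sq_sqrt hq.le
  calc (√q - √p) ^ 2 = 2 * q * (1 - (√q / √p)⁻¹) - q + p := by
        rw [sub_sq, sq_sqrt hp, inv_div]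
        field_simp
        linear_combination (√q - 2 * √p) * hq2
    _ ≤ 2 * q * log (√q / √p) - q + p := by
        gcongr
        exact one_sub_inv_le_log_of_pos (div_pos ha hb)
    _ = q * log (q / p) - q + p := by
        rw [← sqrt_div' _ hp, log_sqrt (div_nonneg hq.le hp)]
        ring

lemma sum_sq_sqrt_sub_sqrt_le_discreteKL {q p : α → ℝ} (hq : ∀ x, 0 ≤ q x)
    (hp : ∀ x, 0 ≤ p x) (hq1 : ∑ x, q x = 1) (hp1 : ∑ x, p x = 1)
    (hqp : ∀ x, q x ≠ 0 → p x ≠ 0) :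
    ∑ x, (√(q x) - √(p x)) ^ 2 ≤ discreteKL q p :=
  calc ∑ x, (√(q x) - √(p x)) ^ 2 ≤ ∑ x, (q x * log (q x / p x) - q x + p x) :=
        sum_le_sum fun x _ => sq_sqrt_sub_sqrt_le (hq x) (hp x) (hqp x)
    _ = discreteKL q p := by
        rw [sum_add_distrib, sum_sub_distrib, hq1, hp1, discreteKL]
        ring

lemma sq_sum_abs_sub_le_four_mul_sum_sq_sqrt_sub_sqrt {q p : α → ℝ} (hq : ∀ x, 0 ≤ q x)
    (hp : ∀ x, 0 ≤ p x) (hq1 : ∑ x, q x = 1) (hp1 : ∑ x, p x = 1) :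
    (∑ x, |q x - p x|) ^ 2 ≤ 4 * ∑ x, (√(q x) - √(p x)) ^ 2 := by
  have hfactor : ∀ x, |q x - p x| = |√(q x) - √(p x)| * (√(q x) + √(p x)) := by
    intro x
    rw [← abs_of_nonneg (by positivity : 0 ≤ √(q x) + √(p x)), ← abs_mul]
    congr 1
    linear_combination sq_sqrt (hp x) - sq_sqrt (hq x)
  have hsum : ∑ x, (√(q x) + √(p x)) ^ 2 ≤ 4 :=
    calc ∑ x, (√(q x) + √(p x)) ^ 2 ≤ ∑ x, 2 * (q x + p x) := by
          refine sum_le_sum fun x _ => ?_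
          nlinarith [sq_sqrt (hq x), sq_sqrt (hp x), sq_nonneg (√(q x) - √(p x))]
      _ = 4 := by
          rw [← mul_sum, sum_add_distrib, hq1, hp1]
          norm_num
  calc (∑ x, |q x - p x|) ^ 2
      ≤ (∑ x, |√(q x) - √(p x)| ^ 2) * ∑ x, (√(q x) + √(p x)) ^ 2 := by
        simpa only [hfactor] using sum_mul_sq_le_sq_mul_sq univ _ _
    _ ≤ 4 * ∑ x, (√(q x) - √(p x)) ^ 2 := by
        simp only [sq_abs]
        rw [mul_comm]
        gcongr

/-- Pinsker's inequality, with the constant `4` that the Hellinger distance gives. -/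
lemma sq_sum_abs_sub_le_four_mul_discreteKL {q p : α → ℝ} (hq : ∀ x, 0 ≤ q x)
    (hp : ∀ x, 0 ≤ p x) (hq1 : ∑ x, q x = 1) (hp1 : ∑ x, p x = 1)
    (hqp : ∀ x, q x ≠ 0 → p x ≠ 0) :
    (∑ x, |q x - p x|) ^ 2 ≤ 4 * discreteKL q p :=
  (sq_sum_abs_sub_le_four_mul_sum_sq_sqrt_sub_sqrt hq hp hq1 hp1).trans
    (by gcongr; exact sum_sq_sqrt_sub_sqrt_le_discreteKL hq hp hq1 hp1 hqp)

lemma discreteKL_le_chiSq {w γ : β → ℝ} (hw : ∀ b, 0 ≤ w b) (hw1 : ∑ b, w b = 1)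
    (hwγ : ∀ b, w b ≠ 0 → γ b ≠ 0) (hγ : ∀ b, 0 ≤ γ b) :
    discreteKL w γ ≤ ∑ b, w b ^ 2 / γ b - 1 := by
  rw [← hw1, ← sum_sub_distrib]
  refine sum_le_sum fun b _ => ?_
  rcases (hw b).eq_or_lt with h | h
  · simp [← h]
  have hγb := (hγ b).lt_of_ne' (hwγ b h.ne')
  calc w b * log (w b / γ b) ≤ w b * (w b / γ b - 1) :=
        mul_le_mul_of_nonneg_left (log_le_sub_one_of_pos (div_pos h hγb)) h.le
    _ = w b ^ 2 / γ b - w b := by ring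

lemma discreteKL_prod {q p : α → ℝ} {w : α → β → ℝ} {γ : β → ℝ}
    (hqp : ∀ x, q x ≠ 0 → p x ≠ 0) (hwγ : ∀ x b, q x ≠ 0 → w x b ≠ 0 → γ b ≠ 0)
    (hw1 : ∀ x, q x ≠ 0 → ∑ b, w x b = 1) :
    discreteKL (fun z : α × β => q z.1 * w z.1 z.2) (fun z => p z.1 * γ z.2)
      = discreteKL q p + ∑ x, q x * discreteKL (w x) γ := by
  have hterm : ∀ x b, q x * w x b * log (q x * w x b / (p x * γ b))
      = q x * log (q x / p x) * w x b + q x * (w x b * log (w x b / γ b)) := by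
    intro x b
    by_cases h : q x = 0 ∨ w x b = 0
    · rcases h with h | h <;> simp [h]
    push Not at h
    rw [mul_div_mul_comm, log_mul (div_ne_zero h.1 (hqp x h.1))
      (div_ne_zero h.2 (hwγ x b h.1 h.2))]
    ring
  have hrow : ∀ x, q x * log (q x / p x) * ∑ b, w x b = q x * log (q x / p x) := by
    intro x
    by_cases h : q x = 0
    · simp [h]
    rw [hw1 x h, mul_one]
  simp only [discreteKL, Fintype.sum_prod_type, hterm, sum_add_distrib, ← mul_sum, hrow]

lemma sum_abs_sub_le_two {q p : α → ℝ} (hq : ∀ x, 0 ≤ q x) (hp : ∀ x, 0 ≤ p x)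
    (hq1 : ∑ x, q x = 1) (hp1 : ∑ x, p x = 1) : ∑ x, |q x - p x| ≤ 2 :=
  calc ∑ x, |q x - p x| ≤ ∑ x, (q x + p x) :=
        sum_le_sum fun x _ => abs_sub_le_iff.2 ⟨by linarith [hp x], by linarith [hq x]⟩
    _ = 2 := by rw [sum_add_distrib, hq1, hp1]; norm_num

lemma discreteKL_comp_equiv (e : α ≃ β) (q p : β → ℝ) :
    discreteKL (q ∘ e) (p ∘ e) = discreteKL q p :=
  e.sum_comp fun y => q y * log (q y / p y)

end DiscreteKL

section TypeClass

variable {d n i : ℕ}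

lemma sum_symbolCount (x : Fin i → Fin d) : ∑ j, symbolCount x j = i := by
  simpa [symbolCount] using (card_eq_sum_card_fiberwise (f := x) (s := univ) (t := univ)
    fun _ _ => mem_univ _).symm

lemma symbolCount_comp_perm (s : Fin n → Fin d) (σ : Equiv.Perm (Fin n)) (j : Fin d) :
    symbolCount (s ∘ σ) j = symbolCount s j :=
  card_equiv σ (by simp)

lemma symbolCount_snoc (x : Fin i → Fin d) (b a : Fin d) :
    symbolCount (Fin.snoc x b : Fin (i + 1) → Fin d) a
      = symbolCount x a + if b = a then 1 else 0 := by
  rw [symbolCount, symbolCount, card_filter, card_filter, Fin.sum_univ_castSucc]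
  simp [Fin.snoc_castSucc, Fin.snoc_last]

lemma symbolCount_comp_castLE_add (hi : i ≤ n) (s : Fin n → Fin d) (a : Fin d) :
    symbolCount (s ∘ Fin.castLE hi) a + #{p : Fin n | i ≤ (p : ℕ) ∧ s p = a}
      = symbolCount s a := by
  have hprefix : symbolCount (s ∘ Fin.castLE hi) a = #{p : Fin n | (p : ℕ) < i ∧ s p = a} := by
    refine card_nbij (Fin.castLE hi) (fun l hl => by simpa using hl)
      (Fin.castLE_injective hi).injOn fun p hp => ?_
    simp only [coe_filter, Set.mem_ofPred_eq, mem_univ, true_and] at hp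
    exact ⟨⟨p, hp.1⟩, by simpa using hp.2, rfl⟩
  rw [hprefix, symbolCount, ← card_filter_add_card_filter_not (s := {p | s p = a})
    (fun p : Fin n => (p : ℕ) < i), filter_filter, filter_filter]
  congr 2 <;> ext p <;> simp [and_comm]

def typeClass (n : ℕ) (k : Fin d → ℕ) : Finset (Fin n → Fin d) :=
  {s | ∀ j, symbolCount s j = k j}

def prefixClass (k : Fin d → ℕ) (hi : i ≤ n) (x : Fin i → Fin d) : Finset (Fin n → Fin d) :=
  {s ∈ typeClass n k | ∀ l, s (Fin.castLE hi l) = x l}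

variable {k : Fin d → ℕ}

lemma typeClass_nonempty (hk : ∑ j, k j = n) : (typeClass n k).Nonempty := by
  have e : (Σ j, Fin (k j)) ≃ Fin n := Fintype.equivOfCardEq (by simp [hk])
  refine ⟨fun p => (e.symm p).1, mem_filter.2 ⟨mem_univ _, fun j => ?_⟩⟩
  rw [symbolCount, card_equiv e.symm (t := {σ | σ.1 = j}) (by simp), card_filter,
    Fintype.sum_sigma]
  simp [apply_ite card]

lemma symbolCount_add_card_suffix {hi : i ≤ n} {x : Fin i → Fin d} {s : Fin n → Fin d}
    (hs : s ∈ prefixClass k hi x) (a : Fin d) :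
    symbolCount x a + #{p : Fin n | i ≤ (p : ℕ) ∧ s p = a} = k a := by
  simp only [prefixClass, typeClass, mem_filter, mem_univ, true_and] at hs
  have hx : s ∘ Fin.castLE hi = x := funext hs.2
  rw [← hs.1 a, ← symbolCount_comp_castLE_add hi, hx]

lemma symbolCount_le_of_mem_prefixClass {hi : i ≤ n} {x : Fin i → Fin d} {s : Fin n → Fin d}
    (hs : s ∈ prefixClass k hi x) (a : Fin d) : symbolCount x a ≤ k a :=
  (symbolCount_add_card_suffix hs a).symm ▸ Nat.le_add_right _ _

lemma comp_perm_mem_prefixClass {hi : i ≤ n} {x : Fin i → Fin d} {s : Fin n → Fin d}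
    (hs : s ∈ prefixClass k hi x) {σ : Equiv.Perm (Fin n)}
    (hσ : ∀ l, σ (Fin.castLE hi l) = Fin.castLE hi l) : s ∘ σ ∈ prefixClass k hi x := by
  simp only [prefixClass, typeClass, mem_filter, mem_univ, true_and] at hs ⊢
  exact ⟨fun j => (symbolCount_comp_perm s σ j).trans (hs.1 j), fun l => by simp [hσ, hs.2]⟩

lemma sum_card_prefixClass (hi : i ≤ n) :
    ∑ x : Fin i → Fin d, #(prefixClass k hi x) = #(typeClass n k) := by
  rw [card_eq_sum_card_fiberwise (f := fun s l => s (Fin.castLE hi l)) (t := univ)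
    fun _ _ => mem_univ _]
  exact sum_congr rfl fun x _ => congrArg card (filter_congr fun s _ => funext_iff.symm)

/-- Swapping position `i` with a later position `p` is a bijection of the strings with a given
prefix of length `i`; double counting the pairs `(s, p)` with `s p = a` then gives the recursion. -/
lemma card_prefixClass_snoc_mul (hi : i + 1 ≤ n) (x : Fin i → Fin d) (a : Fin d) :
    #(prefixClass k hi (Fin.snoc x a)) * (n - i)
      = #(prefixClass k (Nat.le_of_succ_le hi) x) * (k a - symbolCount x a) := by
  have hi' : i ≤ n := Nat.le_of_succ_le hi
  set S := prefixClass k hi' x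
  set pos : Fin n := ⟨i, hi⟩
  have hsnoc : prefixClass k hi (Fin.snoc x a) = {s ∈ S | s pos = a} := by
    ext s
    simp only [S, prefixClass, mem_filter, Fin.forall_fin_succ', Fin.snoc_castSucc,
      Fin.snoc_last, and_assoc]
    rfl
  have hswap : ∀ p ∈ Ici pos, #{s ∈ S | s p = a} = #{s ∈ S | s pos = a} := by
    intro p hp
    have hip : i ≤ (p : ℕ) := Fin.le_def.1 (Finset.mem_Ici.1 hp)
    have hfix : ∀ l : Fin i, Equiv.swap pos p (Fin.castLE hi' l) = Fin.castLE hi' l := fun l =>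
      Equiv.swap_apply_of_ne_of_ne (Fin.ne_of_lt l.isLt) (Fin.ne_of_lt (l.isLt.trans_le hip))
    refine card_nbij' (· ∘ Equiv.swap pos p) (· ∘ Equiv.swap pos p) ?_ ?_ ?_ ?_ <;>
      intro s hs <;> simp only [coe_filter, Set.mem_ofPred_eq] at hs ⊢
    · exact ⟨comp_perm_mem_prefixClass hs.1 hfix, by simpa using hs.2⟩
    · exact ⟨comp_perm_mem_prefixClass hs.1 hfix, by simpa using hs.2⟩
    all_goals funext q; simp
  have hsuffix : ∀ s ∈ S, #{p ∈ Ici pos | s p = a} = k a - symbolCount x a := by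
    intro s hs
    rw [← symbolCount_add_card_suffix hs a, Nat.add_sub_cancel_left]
    congr 1; ext p; simp [pos, Fin.le_def]
  have := card_mul_eq_card_mul (fun (s : Fin n → Fin d) (p : Fin n) => s p = a) hsuffix hswap
  rw [hsnoc, this, Fin.card_Ici, mul_comm]

noncomputable def marginal (k : Fin d → ℕ) (hi : i ≤ n) (x : Fin i → Fin d) : ℝ :=
  #(prefixClass k hi x) / #(typeClass n k)

noncomputable def symbolFreq (n : ℕ) (k : Fin d → ℕ) (a : Fin d) : ℝ := k a / n

noncomputable def iidProb (n : ℕ) (k : Fin d → ℕ) (x : Fin i → Fin d) : ℝ :=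
  ∏ l, symbolFreq n k (x l)

-- Real subtraction: negative only for prefixes of no string of the type class, where `marginal`
-- vanishes; in exchange `remainingCount_snoc` and `sum_nextProb` hold for every prefix.
noncomputable def remainingCount (k : Fin d → ℕ) (x : Fin i → Fin d) (a : Fin d) : ℝ :=
  k a - symbolCount x a

noncomputable def nextProb (n : ℕ) (k : Fin d → ℕ) (x : Fin i → Fin d) (a : Fin d) : ℝ :=
  remainingCount k x a / (n - i)

lemma marginal_nonneg (hi : i ≤ n) (x : Fin i → Fin d) : 0 ≤ marginal k hi x := by
  unfold marginal; positivity

lemma sum_marginal (hk : ∑ j, k j = n) (hi : i ≤ n) : ∑ x, marginal k hi x = 1 := by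
  simp_rw [marginal, ← sum_div, ← Nat.cast_sum, sum_card_prefixClass]
  exact div_self (Nat.cast_ne_zero.2 (typeClass_nonempty hk).card_pos.ne')

lemma marginal_fin_zero (hk : ∑ j, k j = n) (x : Fin 0 → Fin d) : marginal k n.zero_le x = 1 := by
  rw [marginal, prefixClass, filter_true_of_mem fun _ _ l => l.elim0]
  exact div_self (Nat.cast_ne_zero.2 (typeClass_nonempty hk).card_pos.ne')

lemma symbolCount_le_of_marginal_ne_zero {hi : i ≤ n} {x : Fin i → Fin d}
    (h : marginal k hi x ≠ 0) (a : Fin d) : symbolCount x a ≤ k a := by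
  obtain ⟨s, hs⟩ : (prefixClass k hi x).Nonempty := by
    rw [nonempty_iff_ne_empty]; rintro he; simp [marginal, he] at h
  exact symbolCount_le_of_mem_prefixClass hs a

lemma marginal_snoc (hi : i + 1 ≤ n) (x : Fin i → Fin d) (a : Fin d) :
    marginal k hi (Fin.snoc x a) = marginal k (Nat.le_of_succ_le hi) x * nextProb n k x a := by
  have hni : (n : ℝ) - i ≠ 0 := sub_ne_zero.2 (by exact_mod_cast (Nat.lt_of_succ_le hi).ne')
  have hcard := card_prefixClass_snoc_mul (k := k) hi x a
  have hcard' : (#(prefixClass k hi (Fin.snoc x a)) : ℝ) * (n - i)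
      = #(prefixClass k (Nat.le_of_succ_le hi) x) * remainingCount k x a := by
    rcases (prefixClass k (Nat.le_of_succ_le hi) x).eq_empty_or_nonempty with h | ⟨s, hs⟩
    · rw [h, card_empty, zero_mul, mul_eq_zero] at hcard
      simp [h, hcard.resolve_right (by omega)]
    · rw [remainingCount, ← Nat.cast_sub (symbolCount_le_of_mem_prefixClass hs a),
        ← Nat.cast_sub (by omega), ← Nat.cast_mul, ← Nat.cast_mul, hcard]
  rw [marginal, marginal, nextProb, div_mul_div_comm, ← hcard', mul_div_mul_right _ _ hni]

lemma sum_nextProb (hk : ∑ j, k j = n) (hin : i < n) (x : Fin i → Fin d) :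
    ∑ a, nextProb n k x a = 1 := by
  have hni : (n : ℝ) - i ≠ 0 := sub_ne_zero.2 (by exact_mod_cast hin.ne')
  simp_rw [nextProb, remainingCount, ← sum_div, sum_sub_distrib, ← Nat.cast_sum, hk,
    sum_symbolCount]
  exact div_self hni

lemma nextProb_nonneg {hi : i ≤ n} {x : Fin i → Fin d} (h : marginal k hi x ≠ 0) (hin : i < n)
    (a : Fin d) : 0 ≤ nextProb n k x a := by
  have hni : (0 : ℝ) < n - i := sub_pos.2 (by exact_mod_cast hin)
  have hle : (symbolCount x a : ℝ) ≤ k a := by exact_mod_cast symbolCount_le_of_marginal_ne_zero h a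
  exact div_nonneg (sub_nonneg.2 hle) hni.le

lemma symbolFreq_ne_zero_of_nextProb_ne_zero {hi : i ≤ n} {x : Fin i → Fin d}
    (h : marginal k hi x ≠ 0) (hin : i < n) {a : Fin d} (ha : nextProb n k x a ≠ 0) :
    symbolFreq n k a ≠ 0 := by
  have hle := symbolCount_le_of_marginal_ne_zero h a
  have hka : k a ≠ 0 := by
    rintro hka
    simp [nextProb, remainingCount, hka, Nat.le_zero.1 (hka ▸ hle)] at ha
  exact div_ne_zero (Nat.cast_ne_zero.2 hka) (Nat.cast_ne_zero.2 (by omega))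

lemma sum_symbolFreq (hk : ∑ j, k j = n) (hn : n ≠ 0) : ∑ a, symbolFreq n k a = 1 := by
  simp_rw [symbolFreq, ← sum_div, ← Nat.cast_sum, hk]
  exact div_self (Nat.cast_ne_zero.2 hn)

lemma iidProb_nonneg (x : Fin i → Fin d) : 0 ≤ iidProb n k x :=
  prod_nonneg fun _ _ => by unfold symbolFreq; positivity

lemma sum_iidProb (hk : ∑ j, k j = n) (hn : n ≠ 0) : ∑ x : Fin i → Fin d, iidProb n k x = 1 := by
  simp [iidProb, ← Fintype.prod_sum, sum_symbolFreq hk hn]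

lemma iidProb_snoc (x : Fin i → Fin d) (a : Fin d) :
    iidProb n k (Fin.snoc x a : Fin (i + 1) → Fin d) = iidProb n k x * symbolFreq n k a := by
  simp [iidProb, Fin.prod_univ_castSucc]

lemma iidProb_ne_zero {hi : i ≤ n} {x : Fin i → Fin d} (h : marginal k hi x ≠ 0) :
    iidProb n k x ≠ 0 := by
  refine prod_ne_zero_iff.2 fun l _ => div_ne_zero (Nat.cast_ne_zero.2 ?_)
    (Nat.cast_ne_zero.2 (l.pos.trans_le hi).ne')
  have hpos : 0 < symbolCount x (x l) := card_pos.2 ⟨l, by simp⟩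
  exact (hpos.trans_le (symbolCount_le_of_marginal_ne_zero h _)).ne'

lemma sum_marginal_snoc_mul (hi : i + 1 ≤ n) (G : (Fin (i + 1) → Fin d) → ℝ) :
    ∑ y, marginal k hi y * G y
      = ∑ x, marginal k (Nat.le_of_succ_le hi) x * ∑ b, nextProb n k x b * G (Fin.snoc x b) := by
  rw [← (Fin.snocEquiv fun _ => Fin d).sum_comp, Fintype.sum_prod_type, sum_comm]
  refine sum_congr rfl fun x _ => ?_
  rw [mul_sum]
  refine sum_congr rfl fun b _ => ?_
  rw [show (Fin.snocEquiv fun _ => Fin d) (b, x) = Fin.snoc x b from rfl, marginal_snoc, mul_assoc]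

lemma remainingCount_snoc (x : Fin i → Fin d) (b a : Fin d) :
    remainingCount k (Fin.snoc x b : Fin (i + 1) → Fin d) a
      = remainingCount k x a - if b = a then 1 else 0 := by
  rw [remainingCount, remainingCount, symbolCount_snoc]
  push_cast
  ring

lemma sum_nextProb_mul_remainingCount_snoc (hk : ∑ j, k j = n) (hin : i < n) (F : ℝ → ℝ)
    (x : Fin i → Fin d) (a : Fin d) :
    ∑ b, nextProb n k x b * F (remainingCount k (Fin.snoc x b : Fin (i + 1) → Fin d) a)
      = F (remainingCount k x a)
        + nextProb n k x a * (F (remainingCount k x a - 1) - F (remainingCount k x a)) := by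
  have hterm : ∀ b, nextProb n k x b * F (remainingCount k (Fin.snoc x b : Fin (i + 1) → Fin d) a)
      = nextProb n k x b * F (remainingCount k x a)
        + if b = a then nextProb n k x a * (F (remainingCount k x a - 1) - F (remainingCount k x a))
          else 0 := by
    intro b
    rw [remainingCount_snoc]
    split_ifs with h
    · subst h; ring
    · simp
  rw [sum_congr rfl fun b _ => hterm b, sum_add_distrib, ← sum_mul, sum_nextProb hk hin,
    sum_ite_eq', if_pos (mem_univ a), one_mul]

lemma sum_marginal_mul_remainingCount (hk : ∑ j, k j = n) (hn : n ≠ 0) (a : Fin d) :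
    ∀ i (hi : i ≤ n), ∑ x : Fin i → Fin d, marginal k hi x * remainingCount k x a
      = k a * (n - i) / n
  | 0, _ => by
    have hn' : (n : ℝ) ≠ 0 := Nat.cast_ne_zero.2 hn
    simp [marginal_fin_zero hk, remainingCount, symbolCount, hn']
  | i + 1, hi => by
    have hni : (n : ℝ) - i ≠ 0 := sub_ne_zero.2 (by exact_mod_cast (Nat.lt_of_succ_le hi).ne')
    have hstep : ∀ x : Fin i → Fin d,
        ∑ b, nextProb n k x b * remainingCount k (Fin.snoc x b : Fin (i + 1) → Fin d) a
          = remainingCount k x a * ((n - (i + 1)) / (n - i)) := by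
      intro x
      refine (sum_nextProb_mul_remainingCount_snoc (F := id) hk hi x a).trans ?_
      rw [id, id, nextProb]
      field_simp
      ring
    rw [sum_marginal_snoc_mul hi, sum_congr rfl fun x _ => by rw [hstep x, ← mul_assoc],
      ← sum_mul, sum_marginal_mul_remainingCount hk hn a i]
    push_cast
    field_simp

lemma sum_marginal_mul_remainingCount_mul_sub_one (hk : ∑ j, k j = n) (hn : 2 ≤ n) (a : Fin d) :
    ∀ i (hi : i ≤ n), ∑ x : Fin i → Fin d,
        marginal k hi x * (remainingCount k x a * (remainingCount k x a - 1))
      = k a * (k a - 1) * ((n - i) * (n - i - 1)) / (n * (n - 1))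
  | 0, _ => by
    have hn1 : (n : ℝ) - 1 ≠ 0 := sub_ne_zero.2 (by exact_mod_cast (by omega : n ≠ 1))
    simp [marginal_fin_zero hk, remainingCount, symbolCount]
    field_simp
  | i + 1, hi => by
    have hni : (n : ℝ) - i ≠ 0 := sub_ne_zero.2 (by exact_mod_cast (Nat.lt_of_succ_le hi).ne')
    have hstep : ∀ x : Fin i → Fin d,
        ∑ b, nextProb n k x b * (remainingCount k (Fin.snoc x b : Fin (i + 1) → Fin d) a
            * (remainingCount k (Fin.snoc x b : Fin (i + 1) → Fin d) a - 1))
          = remainingCount k x a * (remainingCount k x a - 1) * ((n - (i + 2)) / (n - i)) := by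
      intro x
      rw [sum_nextProb_mul_remainingCount_snoc (F := fun t => t * (t - 1)) hk hi, nextProb]
      field_simp
      ring
    rw [sum_marginal_snoc_mul hi, sum_congr rfl fun x _ => by rw [hstep x, ← mul_assoc],
      ← sum_mul, sum_marginal_mul_remainingCount_mul_sub_one hk hn a i]
    push_cast
    field_simp
    ring

lemma sum_marginal_mul_nextProb_sq_div_le (hk : ∑ j, k j = n) (hn : 2 ≤ n) (hin : i < n)
    (b : Fin d) :
    ∑ x, marginal k hin.le x * (nextProb n k x b ^ 2 / symbolFreq n k b)
      ≤ ((k b - 1) * (n - i - 1) / (n - 1) + 1) / (n - i) := by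
  have hn1 : (0 : ℝ) < n - 1 := sub_pos.2 (by exact_mod_cast hn)
  have hni : (0 : ℝ) < n - i := sub_pos.2 (by exact_mod_cast hin)
  have hsecond : ∑ x, marginal k hin.le x * (nextProb n k x b ^ 2 / symbolFreq n k b)
      = n / (n - i) ^ 2 / k b
        * (∑ x, marginal k hin.le x * (remainingCount k x b * (remainingCount k x b - 1))
          + ∑ x, marginal k hin.le x * remainingCount k x b) := by
    rw [← sum_add_distrib, mul_sum]
    refine sum_congr rfl fun x _ => ?_
    rw [nextProb, symbolFreq, div_pow, div_div_eq_mul_div]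
    ring
  rw [hsecond, sum_marginal_mul_remainingCount_mul_sub_one hk hn b i hin.le,
    sum_marginal_mul_remainingCount hk (by omega) b i hin.le]
  rcases eq_or_ne (k b) 0 with hkb | hkb
  · -- the left side is `0` by the convention `x / 0 = 0`
    rw [hkb, Nat.cast_zero, div_zero, zero_mul, le_div_iff₀ hni, zero_mul, ← sub_nonneg]
    field_simp
    nlinarith [i.cast_nonneg (α := ℝ)]
  · have hkb' : (k b : ℝ) ≠ 0 := Nat.cast_ne_zero.2 hkb
    refine le_of_eq ?_
    field_simp

lemma sum_marginal_mul_chiSq_le (hk : ∑ j, k j = n) (hn : 2 ≤ n) (hin : i < n) :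
    ∑ x, marginal k hin.le x * (∑ b, nextProb n k x b ^ 2 / symbolFreq n k b - 1)
      ≤ (d - 1) * i / ((n - 1) * (n - i)) := by
  have hn1 : (0 : ℝ) < n - 1 := sub_pos.2 (by exact_mod_cast hn)
  have hni : (0 : ℝ) < n - i := sub_pos.2 (by exact_mod_cast hin)
  calc ∑ x, marginal k hin.le x * (∑ b, nextProb n k x b ^ 2 / symbolFreq n k b - 1)
      = ∑ b, ∑ x, marginal k hin.le x * (nextProb n k x b ^ 2 / symbolFreq n k b) - 1 := by
        simp_rw [mul_sub, mul_one, sum_sub_distrib, sum_marginal hk, mul_sum]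
        rw [sum_comm]
    _ ≤ ∑ b : Fin d, ((k b - 1 : ℝ) * (n - i - 1) / (n - 1) + 1) / (n - i) - 1 := by
        gcongr with b
        exact sum_marginal_mul_nextProb_sq_div_le hk hn hin b
    _ = ((n - d) * (n - i - 1) / (n - 1) + d) / (n - i) - 1 := by
        rw [← sum_div, sum_add_distrib, ← sum_div, ← sum_mul, sum_sub_distrib, ← Nat.cast_sum, hk]
        simp
    _ = (d - 1) * i / ((n - 1) * (n - i)) := by
        field_simp
        ring

lemma discreteKL_marginal_snoc_le (hk : ∑ j, k j = n) (hn : 2 ≤ n) (hi : i + 1 ≤ n) :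
    discreteKL (marginal k hi) (iidProb n k)
      ≤ discreteKL (marginal k (Nat.le_of_succ_le hi)) (iidProb n k)
        + (d - 1) * i / ((n - 1) * (n - i)) := by
  have hin : i < n := hi
  let e : (Fin i → Fin d) × Fin d ≃ (Fin (i + 1) → Fin d) :=
    (Equiv.prodComm _ _).trans (Fin.snocEquiv fun _ => Fin d)
  have hchain := discreteKL_prod (w := nextProb n k) (γ := symbolFreq n k)
    (fun _ => iidProb_ne_zero (hi := hin.le))
    (fun _ _ hx => symbolFreq_ne_zero_of_nextProb_ne_zero hx hin)
    (fun x _ => sum_nextProb hk hin x)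
  have hq : marginal k hi ∘ e = fun z => marginal k hin.le z.1 * nextProb n k z.1 z.2 :=
    funext fun z => marginal_snoc hi z.1 z.2
  have hp : iidProb n k ∘ e = fun z => iidProb n k z.1 * symbolFreq n k z.2 :=
    funext fun z => iidProb_snoc z.1 z.2
  rw [← discreteKL_comp_equiv e, hq, hp, hchain]
  gcongr
  calc ∑ x, marginal k hin.le x * discreteKL (nextProb n k x) (symbolFreq n k)
      ≤ ∑ x, marginal k hin.le x * (∑ b, nextProb n k x b ^ 2 / symbolFreq n k b - 1) := by
        refine sum_le_sum fun x _ => ?_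
        rcases eq_or_ne (marginal k hin.le x) 0 with hx | hx
        · simp [hx]
        exact mul_le_mul_of_nonneg_left (discreteKL_le_chiSq (nextProb_nonneg hx hin)
          (sum_nextProb hk hin x) (fun b => symbolFreq_ne_zero_of_nextProb_ne_zero hx hin)
          fun b => by unfold symbolFreq; positivity) (marginal_nonneg _ x)
    _ ≤ (d - 1) * i / ((n - 1) * (n - i)) := sum_marginal_mul_chiSq_le hk hn hin

lemma discreteKL_marginal_le (hk : ∑ j, k j = n) (hd : 1 ≤ d) (hn : 2 ≤ n) :
    ∀ i (hi : i < n), discreteKL (marginal k hi.le) (iidProb n k)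
      ≤ (d - 1) * i ^ 2 / ((n - 1) * (n - i))
  | 0, _ => by simp [discreteKL, marginal_fin_zero hk, iidProb]
  | i + 1, hi => by
    have hD : (0 : ℝ) ≤ d - 1 := sub_nonneg.2 (by exact_mod_cast hd)
    have hni : (0 : ℝ) < n - (i + 1) := sub_pos.2 (by exact_mod_cast hi)
    calc discreteKL (marginal k hi.le) (iidProb n k)
        ≤ (d - 1) * i ^ 2 / ((n - 1) * (n - i)) + (d - 1) * i / ((n - 1) * (n - i)) :=
          (discreteKL_marginal_snoc_le hk hn hi.le).trans
            (by gcongr; exact discreteKL_marginal_le hk hd hn i (Nat.lt_of_succ_lt hi))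
      _ = (d - 1) * (i * (i + 1)) / ((n - 1) * (n - i)) := by ring
      _ ≤ (d - 1) * ((i + 1 : ℕ) : ℝ) ^ 2 / ((n - 1) * (n - (i + 1 : ℕ))) := by
          push_cast
          gcongr <;> nlinarith

end TypeClass

lemma four_mul_div_le_sq {d m n : ℕ} (hd : 1 ≤ d) (hm : 1 ≤ m) (hdm : d * m < n) :
    4 * ((d - 1) * m ^ 2 / ((n - 1) * (n - m)) : ℝ) ≤ (2 * d * m / n) ^ 2 := by
  have hD : (1 : ℝ) ≤ d := by exact_mod_cast hd
  have hM : (1 : ℝ) ≤ m := by exact_mod_cast hm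
  have hN : (d : ℝ) * m + 1 ≤ n := by exact_mod_cast hdm
  have hMD : (m : ℝ) ≤ d * m := le_mul_of_one_le_left (by linarith) hD
  have hrem : (d - 1 : ℝ) * n + 1 ≤ d * (n - m) := by nlinarith
  have hcore : (d - 1 : ℝ) * n ^ 2 ≤ d * (n - 1) * ((d - 1) * n + 1) := by
    have hv : (0 : ℝ) ≤ (n - 1) * n - 2 := by nlinarith
    nlinarith [mul_nonneg (sq_nonneg ((d : ℝ) - 1)) hv, sq_nonneg ((d : ℝ) - 1 - 1 / 4)]
  have hkey : (d - 1 : ℝ) * n ^ 2 ≤ d ^ 2 * ((n - 1) * (n - m)) := by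
    nlinarith [mul_le_mul_of_nonneg_left hrem (by nlinarith : (0 : ℝ) ≤ d * (n - 1))]
  rw [mul_div_assoc', div_pow, div_le_div_iff₀ (by nlinarith) (by nlinarith)]
  nlinarith [mul_le_mul_of_nonneg_left hkey (by positivity : (0 : ℝ) ≤ 4 * m ^ 2)]

/-- **Inequality (eqDiaconis)** (finite de Finetti-type bound for a single type class over
a `d`-letter alphabet). Fix `d ≥ 1`, `n ≥ 1`, `1 ≤ m ≤ n` and a composition
`(k_0, …, k_{d-1})` of `n`. Let `Q` be the marginal on the first `m` coordinates of the
uniform distribution on the type class `T(k_0,…,k_{d-1}) ⊆ {0,…,d-1}^n`, and let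
`γ(j) = k_j/n`. Then `∑_x |Q(x) - ∏_i γ(x_i)| ≤ 2dm/n`. -/
theorem typeClass_marginal_close_to_product
    (d n m : ℕ) (hd : 1 ≤ d) (hn : 1 ≤ n) (hm1 : 1 ≤ m) (hmn : m ≤ n)
    (k : Fin d → ℕ) (hk : ∑ j, k j = n) :
    ∑ x : Fin m → Fin d,
      |((Finset.univ.filter fun s : Fin n → Fin d =>
            (∀ j, symbolCount s j = k j) ∧ ∀ i : Fin m, s (Fin.castLE hmn i) = x i).card : ℝ)
          / ((Finset.univ.filter fun s : Fin n → Fin d =>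
            ∀ j, symbolCount s j = k j).card : ℝ)
        - ∏ i, (k (x i) : ℝ) / n|
      ≤ 2 * d * m / n := by
  have hmarginal : ∀ x : Fin m → Fin d,
      (#{s : Fin n → Fin d | (∀ j, symbolCount s j = k j) ∧ ∀ i, s (Fin.castLE hmn i) = x i} : ℝ)
        / #{s : Fin n → Fin d | ∀ j, symbolCount s j = k j} = marginal k hmn x := fun x => by
    rw [marginal, prefixClass, typeClass, filter_filter]
  simp only [hmarginal]
  change ∑ x, |marginal k hmn x - iidProb n k x| ≤ _
  rcases le_or_gt n (d * m) with hdm | hdm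
  · calc ∑ x, |marginal k hmn x - iidProb n k x| ≤ 2 :=
          sum_abs_sub_le_two (marginal_nonneg hmn) iidProb_nonneg (sum_marginal hk hmn)
            (sum_iidProb hk (by omega))
      _ ≤ 2 * d * m / n := by
          rw [le_div_iff₀ (by exact_mod_cast hn), mul_assoc]
          gcongr
          exact_mod_cast hdm
  · have hn2 : 2 ≤ n := by nlinarith
    have hmn' : m < n := by nlinarith
    refine (sq_le_sq₀ (sum_nonneg fun _ _ => abs_nonneg _) (by positivity)).1 ?_
    calc (∑ x, |marginal k hmn x - iidProb n k x|) ^ 2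
        ≤ 4 * discreteKL (marginal k hmn) (iidProb n k) :=
          sq_sum_abs_sub_le_four_mul_discreteKL (marginal_nonneg hmn) iidProb_nonneg
            (sum_marginal hk hmn) (sum_iidProb hk (by omega)) fun _ => iidProb_ne_zero
      _ ≤ 4 * ((d - 1) * m ^ 2 / ((n - 1) * (n - m))) := by
          gcongr; exact discreteKL_marginal_le hk hd hn2 m hmn'
      _ ≤ (2 * d * m / n) ^ 2 := four_mul_div_le_sq hd hm1 hdm
end

section
/- Let d ≥ 1 and let E_0, E_1, …, E_{d−1} be real numbers with 0 = E_0 ≤ E_1 ≤ … ≤ E_{d−1}. Then the following are equivalent: (i) for every positive integer n and all strings s, s' ∈ {0,…,d−1}^n with ∑_{i=1}^n E_{s_i} = ∑_{i=1}^n E_{s'_i}, the strings s and s' belong to the same type class, i.e. for every symbol j ∈ {0,…,d−1} the number of occurrences of j in s equals the number of occurrences of j in s'; (ii) the family (E_1, …, E_{d−1}) is linearly independent over the rationals ℚ. -/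
open scoped BigOperators

section Aux

variable {d : ℕ}

lemma aux_sum_flatMap {α β : Type*} [AddCommMonoid β] (l : List α) (f : α → List β) :
    (l.flatMap f).sum = (l.map fun a => (f a).sum).sum := by
  induction l with
  | nil => simp
  | cons b t ih => simp [List.flatMap_cons, List.sum_append, ih]

lemma aux_count_get (l : List (Fin d)) (a : Fin d) :
    (Finset.univ.filter fun i : Fin l.length => l.get i = a).card = l.count a := by
  induction l with
  | nil => simp
  | cons b t ih =>
    rw [Finset.card_filter] at ih ⊢
    simp only [List.get_eq_getElem] at ih ⊢
    simp only [List.length_cons]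
    rw [Fin.sum_univ_succ]
    simp only [List.getElem_cons_succ, List.getElem_cons_zero, Fin.val_succ, Fin.val_zero]
    rw [ih, List.count_cons]
    by_cases h : b = a <;> simp [h, add_comm]

lemma aux_count_get' (l : List (Fin d)) (n : ℕ) (h : l.length = n) (a : Fin d) :
    (Finset.univ.filter fun i : Fin n => l.get (Fin.cast h.symm i) = a).card = l.count a := by
  subst h
  simpa using aux_count_get l a

lemma aux_sum_get (l : List (Fin d)) (n : ℕ) (h : l.length = n) (f : Fin d → ℝ) :
    ∑ i : Fin n, f (l.get (Fin.cast h.symm i)) = (l.map f).sum := by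
  subst h
  rw [Fin.sum_univ_def]
  conv_rhs => rw [← List.map_get_finRange l]
  rw [List.map_map]
  rfl

/-- list with `p j` copies of symbol `j` -/
def mkList (p : Fin d → ℕ) : List (Fin d) :=
  (List.finRange d).flatMap fun j => List.replicate (p j) j

lemma mkList_length (p : Fin d → ℕ) : (mkList p).length = ∑ j, p j := by
  rw [mkList, List.length_flatMap, Fin.sum_univ_def]
  simp only [Function.comp_def, List.length_replicate]

lemma mkList_count (p : Fin d → ℕ) (a : Fin d) : (mkList p).count a = p a := by
  rw [mkList, List.count_flatMap]
  simp only [Function.comp_def, List.count_replicate]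
  rw [← Fin.sum_univ_def]
  simp [beq_iff_eq]

lemma mkList_sum (p : Fin d → ℕ) (f : Fin d → ℝ) :
    ((mkList p).map f).sum = ∑ j, (p j : ℝ) * f j := by
  rw [mkList, List.map_flatMap, aux_sum_flatMap]
  simp only [List.map_replicate, List.sum_replicate, nsmul_eq_mul]
  rw [← Fin.sum_univ_def]

end Aux

/-- **Lemma `LemRationalIndependent`.** Let `0 = E_0 ≤ E_1 ≤ … ≤ E_{d-1}` be real
single-site energies. The following are equivalent:
(i) for every `n ≥ 1`, any two strings `s, s' ∈ {0,…,d-1}^n` with the same total energy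
`∑ i, E_{s_i} = ∑ i, E_{s'_i}` lie in the same type class (each symbol occurs equally
often in `s` and `s'`);
(ii) the family `(E_1, …, E_{d-1})` is linearly independent over `ℚ`. -/
theorem sharp_microcanonical_single_type_iff_rationally_independent
    (d : ℕ) (hd : 0 < d) (E : Fin d → ℝ)
    (hE0 : E ⟨0, hd⟩ = 0) (hmono : Monotone E) :
    (∀ n : ℕ, 0 < n → ∀ s s' : Fin n → Fin d,
        ∑ i, E (s i) = ∑ i, E (s' i) →
        ∀ j : Fin d,
          (Finset.univ.filter fun i => s i = j).card
            = (Finset.univ.filter fun i => s' i = j).card)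
      ↔ LinearIndependent ℚ (fun j : {j : Fin d // j ≠ ⟨0, hd⟩} => E (j : Fin d)) := by
  set z : Fin d := ⟨0, hd⟩ with hz
  rw [← LinearIndependent.iff_fractionRing ℤ ℚ, Fintype.linearIndependent_iff]
  constructor
  · -- (i) → ℤ-independence
    intro H g hsum
    set gg : Fin d → ℤ := fun j => if h : j = z then 0 else g ⟨j, h⟩ with hgg
    have hggz : gg z = 0 := by simp [hgg]
    have hggsum : ∑ j : Fin d, (gg j : ℝ) * E j = 0 := by
      have e : ∑ j : Fin d, (gg j : ℝ) * E j
          = ∑ i : {j : Fin d // j ≠ z}, (gg (i : Fin d) : ℝ) * E (i : Fin d) := by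
        rw [← Finset.sum_erase (f := fun j : Fin d => (gg j : ℝ) * E j) (a := z)
          Finset.univ (by simp [hggz])]
        rw [← Finset.filter_ne' Finset.univ z]
        exact Finset.sum_subtype _ (by simp) _
      rw [e, ← hsum]
      refine Finset.sum_congr rfl fun i _ => ?_
      rw [zsmul_eq_mul]
      congr 2
      simp [hgg, i.2]
    set P : ℕ := ∑ j, (gg j).toNat with hP
    set Q : ℕ := ∑ j, (-gg j).toNat with hQ
    set p : Fin d → ℕ := fun j => (gg j).toNat + (if j = z then Q else 0) with hp
    set q : Fin d → ℕ := fun j => (-gg j).toNat + (if j = z then P else 0) with hq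
    have hps : ∑ j, p j = P + Q := by
      simp only [hp]
      rw [Finset.sum_add_distrib, Finset.sum_ite_eq' Finset.univ z fun _ => Q]
      rw [hP]
      simp
    have hqs : ∑ j, q j = P + Q := by
      simp only [hq]
      rw [Finset.sum_add_distrib, Finset.sum_ite_eq' Finset.univ z fun _ => P]
      rw [hQ]
      simp [add_comm]
    have hpq : ∀ j : Fin d, j ≠ z → p j = q j → gg j = 0 := by
      intro j hj h
      simp only [hp, hq, if_neg hj] at h
      omega
    have key : ∀ j : Fin d, p j = q j := by
      intro j
      rcases Nat.eq_zero_or_pos (P + Q) with h0 | hpos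
      · have h1 : (gg j).toNat = 0 := by
          have := Finset.sum_eq_zero_iff.mp (by omega : P = 0) j (Finset.mem_univ j)
          simpa using this
        have h2 : (-gg j).toNat = 0 := by
          have := Finset.sum_eq_zero_iff.mp (by omega : Q = 0) j (Finset.mem_univ j)
          simpa using this
        have hP0 : P = 0 := by omega
        have hQ0 : Q = 0 := by omega
        simp [hp, hq, h1, h2, hP0, hQ0]
      · set n := P + Q with hn
        have hlp : (mkList p).length = n := by rw [mkList_length, hps]
        have hlq : (mkList q).length = n := by rw [mkList_length, hqs]
        set s : Fin n → Fin d := fun i => (mkList p).get (Fin.cast hlp.symm i) with hs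
        set s' : Fin n → Fin d := fun i => (mkList q).get (Fin.cast hlq.symm i) with hs'
        have hE : ∑ i, E (s i) = ∑ i, E (s' i) := by
          rw [hs, hs', aux_sum_get _ _ hlp, aux_sum_get _ _ hlq, mkList_sum, mkList_sum]
          have hterm : ∀ j : Fin d, (p j : ℝ) * E j - (q j : ℝ) * E j = (gg j : ℝ) * E j := by
            intro j
            by_cases hj : j = z
            · subst hj; rw [hE0, hggz]; ring
            · simp only [hp, hq, if_neg hj]
              have h1 : ((gg j).toNat : ℝ) - ((-gg j).toNat : ℝ) = (gg j : ℝ) := by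
                exact_mod_cast congrArg (fun x : ℤ => (x : ℝ)) (Int.toNat_sub_toNat_neg (gg j))
              push_cast
              linear_combination E j * h1
          have h2 : ∑ j, ((p j : ℝ) * E j - (q j : ℝ) * E j) = 0 := by
            rw [Finset.sum_congr rfl (fun j _ => hterm j), hggsum]
          rw [Finset.sum_sub_distrib] at h2
          linarith
        have := H n hpos s s' hE j
        rw [hs, hs'] at this
        rw [aux_count_get' _ _ hlp, aux_count_get' _ _ hlq] at this
        rw [mkList_count, mkList_count] at this
        exact this
    intro j
    have := hpq j j.2 (key j)
    rw [hgg] at this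
    simpa [dif_neg j.2] using this
  · -- ℤ-independence → (i)
    intro H n hn s s' hsum j
    set c : (Fin n → Fin d) → Fin d → ℕ :=
      fun t a => (Finset.univ.filter fun i => t i = a).card with hc
    have hsum' : ∀ t : Fin n → Fin d, ∑ i, E (t i) = ∑ a : Fin d, (c t a : ℝ) * E a := by
      intro t
      rw [← Finset.sum_fiberwise Finset.univ t (fun i => E (t i))]
      refine Finset.sum_congr rfl fun a _ => ?_
      have hcongr : ∀ i ∈ Finset.univ.filter (fun i => t i = a), E (t i) = E a := fun i hi => by
        rw [(Finset.mem_filter.mp hi).2]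
      rw [Finset.sum_congr rfl hcongr, Finset.sum_const, nsmul_eq_mul]
    have htot : ∀ t : Fin n → Fin d, ∑ a : Fin d, c t a = n := by
      intro t
      have := Finset.card_eq_sum_card_fiberwise
        (f := t) (s := Finset.univ) (t := Finset.univ) (fun x _ => Finset.mem_univ _)
      simp only [Finset.card_univ, Fintype.card_fin] at this
      simp only [hc]
      exact this.symm
    have hfull : ∑ a : Fin d, ((c s a : ℤ) - (c s' a : ℤ)) • E a = 0 := by
      have h1 := hsum' s
      have h2 := hsum' s'
      rw [h1, h2] at hsum
      simp only [zsmul_eq_mul]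
      push_cast
      have e : ∑ a : Fin d, (((c s a : ℝ) - (c s' a : ℝ)) * E a)
          = ∑ a : Fin d, (c s a : ℝ) * E a - ∑ a : Fin d, (c s' a : ℝ) * E a := by
        rw [← Finset.sum_sub_distrib]
        exact Finset.sum_congr rfl fun a _ => by ring
      rw [e, hsum, sub_self]
    have hne : ∀ a : Fin d, a ≠ z → c s a = c s' a := by
      have happ := H (fun a : {j : Fin d // j ≠ z} => (c s (a : Fin d) : ℤ) - (c s' (a : Fin d) : ℤ)) ?_
      · intro a ha
        have := happ ⟨a, ha⟩
        simp only at this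
        omega
      · have e : ∑ a : Fin d, ((c s a : ℤ) - (c s' a : ℤ)) • E a
            = ∑ i : {j : Fin d // j ≠ z},
                ((c s (i : Fin d) : ℤ) - (c s' (i : Fin d) : ℤ)) • E (i : Fin d) := by
          rw [← Finset.sum_erase (f := fun a : Fin d => ((c s a : ℤ) - (c s' a : ℤ)) • E a)
            (a := z) Finset.univ (by simp [hE0])]
          rw [← Finset.filter_ne' Finset.univ z]
          exact Finset.sum_subtype _ (by simp) _
        rw [← e]
        exact hfull
    by_cases hj : j = z
    · have h1 := htot s
      have h2 := htot s'
      rw [← Finset.sum_erase_add Finset.univ _ (Finset.mem_univ j)] at h1 h2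
      have he : ∑ a ∈ Finset.univ.erase j, c s a = ∑ a ∈ Finset.univ.erase j, c s' a :=
        Finset.sum_congr rfl fun a ha => hne a (hj ▸ Finset.ne_of_mem_erase ha)
      simp only [hc] at h1 h2 he
      omega
    · have := hne j hj
      simpa [hc] using this
end

section
/- Let N be a positive integer, let H be an N×N Hermitian complex matrix, and let v_1, v_2 ∈ ℂ^N satisfy H v_1 = e_1 v_1 and H v_2 = e_2 v_2 for real numbers e_1, e_2. Let ρ be any N×N complex matrix, let σ > 0, let g(t) = (2πσ²)^{−1/2}·exp(−t²/(2σ²)), and define ω := ∫_ℝ g(t) · exp(−itH) ρ exp(itH) dt (an entrywise Bochner integral, exp denoting the matrix exponential). Then ⟨v_1, ω v_2⟩ = exp(−σ²(e_1−e_2)²/2) · ⟨v_1, ρ v_2⟩, where ⟨·,·⟩ is the standard inner product on ℂ^N. -/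
open scoped BigOperators Matrix

/-- The centered Gaussian probability density with variance `σ²`:
`g(t) = (2πσ²)^{-1/2} exp(-t²/(2σ²))`. -/
noncomputable def gaussDensity (σ t : ℝ) : ℝ :=
  (Real.sqrt (2 * Real.pi * σ ^ 2))⁻¹ * Real.exp (-t ^ 2 / (2 * σ ^ 2))

/-- The Gaussian time-average `ω = ∫ g(t) exp(-itH) ρ exp(itH) dt`, defined as an
entrywise Bochner integral (each entry is a `ℂ`-valued Bochner integral). -/
noncomputable def gaussTimeAverage {N : ℕ} (σ : ℝ) (H ρ : Matrix (Fin N) (Fin N) ℂ) :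
    Matrix (Fin N) (Fin N) ℂ :=
  Matrix.of fun i j => ∫ t : ℝ, (gaussDensity σ t : ℂ) *
    ((NormedSpace.exp ((-(Complex.I * (t : ℂ))) • H) * ρ *
        NormedSpace.exp ((Complex.I * (t : ℂ)) • H)) i j)

/-! Since `H` is Hermitian, `exp(-itH)` is unitary with adjoint `exp(itH)`, so `v₁` and `v₂` are
eigenvectors of both exponentials and `⟨v₁, exp(-itH) ρ exp(itH) v₂⟩ = e^{it(e₂-e₁)} ⟨v₁, ρ v₂⟩`.
Unitarity also bounds the integrand, so the entrywise integral commutes with the inner product,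
and what remains is the Gaussian average of `e^{it(e₂-e₁)}`: the characteristic function of the
centred normal law of variance `σ²`, evaluated at `e₂ - e₁`. -/

open Complex MeasureTheory ProbabilityTheory

namespace Matrix

variable {n 𝕜 : Type*} [Fintype n] [RCLike 𝕜]

open scoped Norms.Operator in
theorem exp_mulVec_of_mulVec_eq_smul [DecidableEq n] {A : Matrix n n 𝕜} {v : n → 𝕜} {μ : 𝕜}
    (h : A *ᵥ v = μ • v) : NormedSpace.exp A *ᵥ v = NormedSpace.exp μ • v := by
  have hpow (k : ℕ) : A ^ k *ᵥ v = μ ^ k • v := by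
    induction k with
    | zero => simp
    | succ k ih => rw [pow_succ', ← mulVec_mulVec, ih, mulVec_smul, h, smul_smul, pow_succ]
  have hA := (NormedSpace.exp_series_hasSum_exp' (𝕂 := 𝕜) A).map (mulVec.addMonoidHomLeft v)
    (continuous_id.matrix_mulVec continuous_const)
  have hμ := (NormedSpace.exp_series_hasSum_exp' (𝕂 := 𝕜) μ).smul_const v
  refine hA.unique (hμ.congr_fun fun k => ?_)
  simp [Function.comp, mulVec.addMonoidHomLeft, smul_mulVec, hpow, smul_smul]

theorem IsHermitian.conjTranspose_exp_smul [DecidableEq n] {H : Matrix n n 𝕜}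
    (hH : H.IsHermitian) (c : 𝕜) :
    (NormedSpace.exp (c • H))ᴴ = NormedSpace.exp (star c • H) := by
  rw [← exp_conjTranspose, conjTranspose_smul, hH.eq]

theorem IsHermitian.exp_smul_mem_unitaryGroup [DecidableEq n] {H : Matrix n n 𝕜}
    (hH : H.IsHermitian) {c : 𝕜} (hc : star c = -c) :
    NormedSpace.exp (c • H) ∈ unitaryGroup n 𝕜 := by
  rw [mem_unitaryGroup_iff, star_eq_conjTranspose, hH.conjTranspose_exp_smul, hc,
    ← exp_add_of_commute _ _ ((Commute.refl H).smul_left _ |>.smul_right _)]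
  simp

theorem norm_unitary_mul_mul_unitary_apply_le [DecidableEq n] {U V : Matrix n n 𝕜}
    (hU : U ∈ unitaryGroup n 𝕜) (hV : V ∈ unitaryGroup n 𝕜) (A : Matrix n n 𝕜) (i j : n) :
    ‖(U * A * V) i j‖ ≤ ∑ k, ∑ l, ‖A k l‖ := by
  calc ‖(U * A * V) i j‖ = ‖∑ k, ∑ l, U i k * A k l * V l j‖ := by
        simp only [mul_apply, Finset.sum_mul]
        rw [Finset.sum_comm]
    _ ≤ ∑ k, ∑ l, ‖U i k * A k l * V l j‖ :=
        (norm_sum_le _ _).trans (Finset.sum_le_sum fun k _ => norm_sum_le _ _)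
    _ ≤ ∑ k, ∑ l, ‖A k l‖ := by
        gcongr with k _ l _
        have := entry_norm_bound_of_unitary hU i k
        have := entry_norm_bound_of_unitary hV l j
        calc ‖U i k * A k l * V l j‖ ≤ 1 * ‖A k l‖ * 1 := by rw [norm_mul, norm_mul]; gcongr
          _ = ‖A k l‖ := by ring

theorem integral_dotProduct_mulVec {α m : Type*} [Fintype m] [MeasurableSpace α]
    {μ : Measure α} {F : α → Matrix m n 𝕜} (hF : ∀ i j, Integrable (fun a => F a i j) μ)
    (w : m → 𝕜) (v : n → 𝕜) :
    ∫ a, w ⬝ᵥ F a *ᵥ v ∂μ = w ⬝ᵥ (of fun i j => ∫ a, F a i j ∂μ) *ᵥ v := by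
  simp only [dotProduct, mulVec, of_apply, Finset.mul_sum]
  rw [integral_finsetSum _ fun i _ => integrable_finsetSum _ fun j _ =>
    ((hF i j).mul_const _).const_mul _]
  refine Finset.sum_congr rfl fun i _ => ?_
  rw [integral_finsetSum _ fun j _ => ((hF i j).mul_const _).const_mul _]
  simp only [integral_mul_const, integral_const_mul]

end Matrix

theorem gaussDensity_eq_gaussianPDFReal (σ : ℝ) :
    gaussDensity σ = gaussianPDFReal 0 (.mk (σ ^ 2) (sq_nonneg σ)) := by
  funext t
  simp only [gaussDensity, gaussianPDFReal, sub_zero]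
  rfl

theorem integrable_gaussDensity_mul {f : ℝ → ℂ} (hf : Continuous f) {C : ℝ}
    (hC : ∀ t, ‖f t‖ ≤ C) (σ : ℝ) : Integrable fun t => (gaussDensity σ t : ℂ) * f t := by
  rw [gaussDensity_eq_gaussianPDFReal]
  exact (integrable_gaussianPDFReal _ _).ofReal.mul_bdd hf.aestronglyMeasurable (ae_of_all _ hC)

theorem integral_gaussDensity_mul_cexp {σ : ℝ} (hσ : σ ≠ 0) (a : ℝ) :
    ∫ t, (gaussDensity σ t : ℂ) * cexp (a * t * I) = Real.exp (-(σ ^ 2 * a ^ 2) / 2) := by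
  have hv : (.mk (σ ^ 2) (sq_nonneg σ) : NNReal) ≠ 0 := by
    simpa [← NNReal.coe_ne_zero] using hσ
  have hchar := charFun_gaussianReal (μ := 0) (v := .mk (σ ^ 2) (sq_nonneg σ)) a
  rw [charFun_apply_real, integral_gaussianReal_eq_integral_smul hv] at hchar
  simp only [Complex.real_smul] at hchar
  rw [gaussDensity_eq_gaussianPDFReal, hchar, NNReal.coe_mk]
  push_cast
  ring_nf

open Matrix

section TimeEvolution

variable {n : Type*} [Fintype n] [DecidableEq n]

noncomputable def timeEvolution (H ρ : Matrix n n ℂ) (t : ℝ) : Matrix n n ℂ :=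
  NormedSpace.exp ((-(I * t)) • H) * ρ * NormedSpace.exp ((I * t) • H)

theorem star_dotProduct_timeEvolution_mulVec {H : Matrix n n ℂ} (hH : H.IsHermitian)
    (ρ : Matrix n n ℂ) {v₁ v₂ : n → ℂ} {e₁ e₂ : ℝ} (hv₁ : H *ᵥ v₁ = (e₁ : ℂ) • v₁)
    (hv₂ : H *ᵥ v₂ = (e₂ : ℂ) • v₂) (t : ℝ) :
    star v₁ ⬝ᵥ timeEvolution H ρ t *ᵥ v₂
      = cexp ((e₂ - e₁ : ℝ) * t * I) * (star v₁ ⬝ᵥ ρ *ᵥ v₂) := by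
  have hexp {v : n → ℂ} {e : ℝ} (hv : H *ᵥ v = (e : ℂ) • v) :
      NormedSpace.exp ((I * t) • H) *ᵥ v = cexp (e * t * I) • v := by
    rw [exp_mulVec_of_mulVec_eq_smul (μ := I * t * e) (by rw [smul_mulVec, hv, smul_smul]),
      ← Complex.exp_eq_exp_ℂ]
    ring_nf
  have hleft : star v₁ ᵥ* NormedSpace.exp ((-(I * t)) • H) = cexp (-(e₁ * t * I)) • star v₁ := by
    rw [← conjTranspose_conjTranspose (NormedSpace.exp _), ← star_mulVec,
      hH.conjTranspose_exp_smul, show star (-(I * t)) = I * t by simp, hexp hv₁, star_smul,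
      RCLike.star_def, ← Complex.exp_conj]
    simp
  rw [timeEvolution, ← mulVec_mulVec, ← mulVec_mulVec, hexp hv₂, dotProduct_mulVec, hleft]
  simp only [mulVec_smul, smul_dotProduct, dotProduct_smul, smul_eq_mul]
  rw [← mul_assoc, ← Complex.exp_add]
  push_cast
  ring_nf

open scoped Norms.Operator in
theorem continuous_timeEvolution (H ρ : Matrix n n ℂ) : Continuous (timeEvolution H ρ) := by
  unfold timeEvolution
  fun_prop

theorem norm_timeEvolution_apply_le {H : Matrix n n ℂ} (hH : H.IsHermitian) (ρ : Matrix n n ℂ)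
    (t : ℝ) (i j : n) : ‖timeEvolution H ρ t i j‖ ≤ ∑ k, ∑ l, ‖ρ k l‖ :=
  norm_unitary_mul_mul_unitary_apply_le (hH.exp_smul_mem_unitaryGroup (by simp))
    (hH.exp_smul_mem_unitaryGroup (by simp)) ρ i j

end TimeEvolution

theorem gaussTimeAverage_inner_eigenvectors_general
    (N : ℕ) (H ρ : Matrix (Fin N) (Fin N) ℂ) (hH : H.IsHermitian)
    (v₁ v₂ : Fin N → ℂ) (e₁ e₂ : ℝ)
    (hv₁ : H.mulVec v₁ = (e₁ : ℂ) • v₁) (hv₂ : H.mulVec v₂ = (e₂ : ℂ) • v₂)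
    (σ : ℝ) (hσ : 0 < σ) :
    star v₁ ⬝ᵥ (gaussTimeAverage σ H ρ).mulVec v₂
      = (Real.exp (-(σ ^ 2 * (e₁ - e₂) ^ 2) / 2) : ℂ) * (star v₁ ⬝ᵥ ρ.mulVec v₂) := by
  have hint (i j : Fin N) :
      Integrable fun t => (gaussDensity σ t : ℂ) * timeEvolution H ρ t i j :=
    integrable_gaussDensity_mul ((continuous_apply_apply i j).comp (continuous_timeEvolution H ρ))
      (norm_timeEvolution_apply_le hH ρ · i j) σ
  calc star v₁ ⬝ᵥ gaussTimeAverage σ H ρ *ᵥ v₂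
      = ∫ t, star v₁ ⬝ᵥ ((gaussDensity σ t : ℂ) • timeEvolution H ρ t) *ᵥ v₂ :=
        (integral_dotProduct_mulVec hint _ _).symm
    _ = ∫ t, (gaussDensity σ t : ℂ) * cexp ((e₂ - e₁ : ℝ) * t * I) * (star v₁ ⬝ᵥ ρ *ᵥ v₂) := by
        simp only [smul_mulVec, dotProduct_smul, smul_eq_mul,
          star_dotProduct_timeEvolution_mulVec hH ρ hv₁ hv₂, mul_assoc]
    _ = _ := by
        rw [integral_mul_const, integral_gaussDensity_mul_cexp hσ.ne', sub_sq_comm]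

/-- **Off-diagonal damping identity** from the proof of Theorem `TheWeakLocalDiagonality`:
if `H v₁ = e₁ v₁` and `H v₂ = e₂ v₂` for a Hermitian matrix `H`, then the Gaussian
time-average `ω` of any matrix `ρ` satisfies
`⟨v₁, ω v₂⟩ = exp(-σ²(e₁-e₂)²/2) ⟨v₁, ρ v₂⟩`. -/
theorem gaussTimeAverage_inner_eigenvectors
    (N : ℕ) (hN : 0 < N) (H ρ : Matrix (Fin N) (Fin N) ℂ) (hH : H.IsHermitian)
    (v₁ v₂ : Fin N → ℂ) (e₁ e₂ : ℝ)
    (hv₁ : H.mulVec v₁ = (e₁ : ℂ) • v₁) (hv₂ : H.mulVec v₂ = (e₂ : ℂ) • v₂)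
    (σ : ℝ) (hσ : 0 < σ) :
    star v₁ ⬝ᵥ (gaussTimeAverage σ H ρ).mulVec v₂
      = (Real.exp (-(σ ^ 2 * (e₁ - e₂) ^ 2) / 2) : ℂ) * (star v₁ ⬝ᵥ ρ.mulVec v₂) :=
  gaussTimeAverage_inner_eigenvectors_general N H ρ hH v₁ v₂ e₁ e₂ hv₁ hv₂ σ hσ
end

section
/- Let 0 ≤ δ < u < 1/2 be reals and let n, m be positive integers satisfying 5 ≤ m ≤ n(u−δ), (20/m)·log(m/u) ≤ log((1−u)/u), and ⌈n(u−δ)⌉ ≤ ⌊nu⌋. Set c := (1 − u + 1/n)/(u − 1/n) and α := 1/n + 2·log n/(n·log c). Then α < u/2 − 1/n, and ( ∑_{j ∈ ℤ, n(u−δ) ≤ j < n(u−α)} C(n,j) ) / ( ∑_{j ∈ ℤ, n(u−δ) ≤ j ≤ nu} C(n,j) ) ≤ δ/(n·√u). -/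
/-!
Write `s = n u` and `c = (n - s + 1) / (s - 1)`. The ratio `C(n, k + 1) / C(n, k) = (n - k) / (k + 1)`
is at least `c` as long as `k + 1 ≤ s - 1`, and at least `4c/5` one step further, up to `⌊s⌋`,
because `s ≥ 5`. Hence the binomial coefficients below `s - nα` form a lower tail dominated by a
geometric series of ratio `1/c`: their sum is at most `(5/4) · c/(c - 1) · c^{-(⌊s⌋ - ⌊s - nα⌋)}`
times `C(n, ⌊s⌋)`, a term of the denominator. The choice of `α` makes `c^{nα - 1} = n²`, and
`(5√u/4) · c/(c - 1) ≤ 1 + 1/log c ≤ nα < nδ` turns `5/(4n²) · c/(c - 1)` into `δ/(n√u)`. The bound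
`α < u/2 - 1/n` reduces to `2 log n < (s/2 - 2) log c`, which follows from the hypothesis on `m`
since `log c > log((1 - u)/u)` and `log n = log(s/m) + log(m/u)`.
-/

open Finset Real

theorem Nat.cast_choose_succ_mul {R : Type*} [CommRing R] (n k : ℕ) :
    (n.choose (k + 1) : R) * (k + 1) = n.choose k * (n - k) := by
  rcases le_or_gt k n with hkn | hnk
  · exact_mod_cast congrArg (Nat.cast : ℕ → R) (Nat.choose_succ_right_eq n k) |>.trans
      (by push_cast [Nat.cast_sub hkn]; ring)
  · simp [Nat.choose_eq_zero_of_lt hnk, Nat.choose_eq_zero_of_lt (hnk.trans k.lt_succ_self)]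

theorem mul_choose_le_choose_succ {n k : ℕ} {r : ℝ} (h : r * (k + 1) ≤ n - k) :
    r * n.choose k ≤ n.choose (k + 1) := by
  have hk : (0 : ℝ) < k + 1 := by positivity
  rw [← mul_le_mul_iff_left₀ hk, Nat.cast_choose_succ_mul]
  nlinarith [(n.choose k).cast_nonneg (α := ℝ)]

theorem pow_mul_choose_le_choose {n a b : ℕ} {r : ℝ} (hr : 0 ≤ r) (hab : a ≤ b)
    (h : r * b ≤ n + 1 - b) : r ^ (b - a) * n.choose a ≤ n.choose b := by
  have := geom_le (u := fun i => (n.choose (a + i) : ℝ)) hr (b - a) fun i hi =>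
    mul_choose_le_choose_succ <| by
      have : ((a + i : ℕ) : ℝ) + 1 ≤ b := by exact_mod_cast (by omega : a + i + 1 ≤ b)
      push_cast at this ⊢
      nlinarith
  simpa [Nat.add_sub_cancel' hab] using this

theorem sum_range_succ_le_of_mul_le_succ {f : ℕ → ℝ} {r : ℝ} (hr : 1 < r) (hf : 0 ≤ f 0)
    {K : ℕ} (h : ∀ k < K, r * f k ≤ f (k + 1)) :
    ∑ k ∈ range (K + 1), f k ≤ r / (r - 1) * f K := by
  have hr1 : 0 < r - 1 := by linarith
  induction K with
  | zero =>
    have : 1 ≤ r / (r - 1) := by rw [le_div_iff₀ hr1]; linarith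
    simpa using le_mul_of_one_le_left hf this
  | succ K ih =>
    have hK := ih fun k hk => h k (by omega)
    have step := h K K.lt_succ_self
    rw [sum_range_succ]
    calc ∑ k ∈ range (K + 1), f k + f (K + 1) ≤ r * f K / (r - 1) + f (K + 1) := by
          rw [mul_div_right_comm]; gcongr
      _ ≤ f (K + 1) / (r - 1) + f (K + 1) := by gcongr
      _ = r / (r - 1) * f (K + 1) := by field_simp; ring

theorem sum_range_succ_choose_le {n K : ℕ} {r : ℝ} (hr : 1 < r) (h : r * K ≤ n + 1 - K) :
    ∑ k ∈ range (K + 1), (n.choose k : ℝ) ≤ r / (r - 1) * n.choose K :=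
  sum_range_succ_le_of_mul_le_succ (f := fun k => (n.choose k : ℝ)) hr (Nat.cast_nonneg _)
    fun k hk => mul_choose_le_choose_succ <| by
      have : (k : ℝ) + 1 ≤ K := by exact_mod_cast hk
      nlinarith

theorem pow_mul_sum_range_choose_le {n K : ℕ} {s c : ℝ} (hs : 5 ≤ s) (hc : 1 < c)
    (hcs : c * (s - 1) = n - s + 1) (hK : K ≤ s - 1) :
    4 / 5 * c ^ (⌊s⌋₊ - K) * ∑ k ∈ range (K + 1), (n.choose k : ℝ)
      ≤ c / (c - 1) * n.choose ⌊s⌋₊ := by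
  have hJ : s - 1 < ⌊s⌋₊ := Nat.sub_one_lt_floor s
  have hJs : (⌊s⌋₊ : ℝ) ≤ s := Nat.floor_le (by linarith)
  obtain ⟨i, hi⟩ : ∃ i, ⌊s⌋₊ = i + 1 := Nat.exists_eq_add_one.mpr (by
    exact_mod_cast (show (0 : ℝ) < ⌊s⌋₊ by linarith))
  rw [hi] at hJ hJs ⊢
  push_cast at hJ hJs
  have hKi : K ≤ i := Nat.lt_succ_iff.mp (by exact_mod_cast (show (K : ℝ) < i + 1 by linarith))
  have htail := sum_range_succ_choose_le (n := n) (K := K) hc (by nlinarith)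
  have hgrow := pow_mul_choose_le_choose (n := n) (by linarith) hKi (r := c) (by nlinarith)
  -- the last step up to `⌊s⌋₊` only has ratio `4 / 5 * c`, as `s / (s - 1) ≤ 5 / 4`
  have htop := pow_mul_choose_le_choose (n := n) (a := i) (b := i + 1) (r := 4 / 5 * c)
    (by linarith) (by omega) (by push_cast; nlinarith)
  rw [Nat.add_sub_cancel_left, pow_one] at htop
  rw [Nat.sub_add_comm hKi, pow_succ]
  have hq : 0 ≤ c / (c - 1) := div_nonneg (by linarith) (by linarith)
  calc 4 / 5 * (c ^ (i - K) * c) * ∑ k ∈ range (K + 1), (n.choose k : ℝ)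
      ≤ 4 / 5 * (c ^ (i - K) * c) * (c / (c - 1) * n.choose K) := by gcongr
    _ = c / (c - 1) * (4 / 5 * c * (c ^ (i - K) * n.choose K)) := by ring
    _ ≤ c / (c - 1) * n.choose (i + 1) := by gcongr; exact htop.trans' (by gcongr)

theorem sq_mul_sum_range_choose_le {n K : ℕ} {u c β : ℝ} (hs : 5 ≤ n * u) (hc : 1 < c)
    (hcs : c * (n * u - 1) = n - n * u + 1) (hβ1 : 1 ≤ β) (hβ : c ^ (β - 1) = n ^ 2)
    (hK : K ≤ n * u - β) :
    (n : ℝ) ^ 2 * ∑ k ∈ range (K + 1), (n.choose k : ℝ)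
      ≤ 5 / 4 * (c / (c - 1) * n.choose ⌊n * u⌋₊) := by
  have hKJ : K ≤ ⌊n * u⌋₊ := by
    exact_mod_cast (show (K : ℝ) ≤ ⌊n * u⌋₊ by linarith [Nat.sub_one_lt_floor ((n : ℝ) * u)])
  have hpow : (n : ℝ) ^ 2 ≤ c ^ (⌊n * u⌋₊ - K) := by
    rw [← hβ, ← rpow_natCast, Nat.cast_sub hKJ]
    exact rpow_le_rpow_of_exponent_le hc.le (by linarith [Nat.sub_one_lt_floor ((n : ℝ) * u)])
  have hT : 0 ≤ ∑ k ∈ range (K + 1), (n.choose k : ℝ) := sum_nonneg fun _ _ => by positivity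
  have := pow_mul_sum_range_choose_le hs hc hcs (by linarith : (K : ℝ) ≤ n * u - 1)
  calc (n : ℝ) ^ 2 * ∑ k ∈ range (K + 1), (n.choose k : ℝ)
      ≤ c ^ (⌊n * u⌋₊ - K) * ∑ k ∈ range (K + 1), (n.choose k : ℝ) := by gcongr
    _ ≤ 5 / 4 * (c / (c - 1) * n.choose ⌊n * u⌋₊) := by linarith

theorem sum_filter_choose_div_sum_filter_choose_le {n : ℕ} {u c β a : ℝ} (hs : 5 ≤ n * u)
    (hu : u ≤ 1) (hc : 1 < c) (hcs : c * (n * u - 1) = n - n * u + 1) (hβ1 : 1 ≤ β)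
    (hβs : β ≤ n * u) (hβ : c ^ (β - 1) = n ^ 2) (ha : a ≤ ⌊n * u⌋₊) :
    (∑ k ∈ (range (n + 1)).filter (fun k : ℕ => a ≤ k ∧ (k : ℝ) < n * u - β), (n.choose k : ℝ))
      / ∑ k ∈ (range (n + 1)).filter (fun k : ℕ => a ≤ k ∧ (k : ℝ) ≤ n * u), (n.choose k : ℝ)
      ≤ 5 / 4 * (c / (c - 1)) / n ^ 2 := by
  have hn : (0 : ℝ) < n := by nlinarith [n.cast_nonneg (α := ℝ)]
  have hJn : ⌊(n : ℝ) * u⌋₊ ≤ n := Nat.floor_le_of_le (by nlinarith)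
  have hCJ : (0 : ℝ) < n.choose ⌊(n : ℝ) * u⌋₊ := by exact_mod_cast Nat.choose_pos hJn
  have hnum : ∑ k ∈ (range (n + 1)).filter (fun k : ℕ => a ≤ k ∧ (k : ℝ) < n * u - β),
      (n.choose k : ℝ) ≤ ∑ k ∈ range (⌊n * u - β⌋₊ + 1), (n.choose k : ℝ) :=
    sum_le_sum_of_subset_of_nonneg (fun k hk => mem_range.mpr
      (Nat.lt_succ_of_le (Nat.le_floor (mem_filter.mp hk).2.2.le))) (fun _ _ _ => by positivity)
  have hden : (n.choose ⌊(n : ℝ) * u⌋₊ : ℝ)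
      ≤ ∑ k ∈ (range (n + 1)).filter (fun k : ℕ => a ≤ k ∧ (k : ℝ) ≤ n * u), (n.choose k : ℝ) :=
    single_le_sum (f := fun k => (n.choose k : ℝ)) (fun _ _ => by positivity)
      (mem_filter.mpr ⟨mem_range.mpr (Nat.lt_succ_of_le hJn), ha, Nat.floor_le (by positivity)⟩)
  have := sq_mul_sum_range_choose_le hs hc hcs hβ1 hβ (Nat.floor_le (by linarith))
  calc _ ≤ (∑ k ∈ range (⌊n * u - β⌋₊ + 1), (n.choose k : ℝ)) / n.choose ⌊(n : ℝ) * u⌋₊ :=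
        div_le_div₀ (sum_nonneg fun _ _ => by positivity) hnum hCJ hden
    _ ≤ 5 / 4 * (c / (c - 1)) / n ^ 2 := by
      rw [div_le_div_iff₀ hCJ (by positivity)]
      linarith

theorem sum_filter_Icc_toNat {M : Type*} [AddCommMonoid M] (n : ℕ) (p : ℤ → Prop)
    [DecidablePred p] (f : ℕ → M) :
    ∑ j ∈ (Icc (0 : ℤ) n).filter p, f j.toNat
      = ∑ k ∈ (range (n + 1)).filter (fun k : ℕ => p k), f k := by
  refine sum_nbij' (fun j => j.toNat) (fun k => (k : ℤ)) ?_ ?_ ?_ ?_ ?_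
  · intro j hj
    simp only [mem_filter, mem_Icc, mem_range] at hj ⊢
    exact ⟨by omega, by rw [Int.toNat_of_nonneg hj.1.1]; exact hj.2⟩
  · intro k hk
    simp only [mem_filter, mem_Icc, mem_range] at hk ⊢
    exact ⟨⟨by omega, by omega⟩, hk.2⟩
  · intro j hj
    simp only [mem_filter, mem_Icc] at hj
    exact Int.toNat_of_nonneg hj.1.1
  · intro k _
    simp
  · intro j _
    rfl

theorem two_mul_log_lt_mul_log {n u m c : ℝ} (hu : 0 < u) (hu1 : u ≤ 1) (hm : 5 ≤ m)
    (hmn : m ≤ n * u) (hlog : 20 / m * log (m / u) < log c) :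
    2 * log n < (n * u / 2 - 2) * log c := by
  have hm0 : 0 < m := by linarith
  have hn : 0 < n := pos_of_mul_pos_left (by linarith) hu.le
  set L := log (m / u)
  have hL : 1 ≤ L := by
    rw [le_log_iff_exp_le (by positivity), le_div_iff₀ hu]
    nlinarith [exp_one_lt_d9]
  have hsplit : log n ≤ n * u / m - 1 + L := by
    have : log n = log (n * u / m) + L := by
      rw [← log_mul (by positivity) (by positivity)]; congr 1; field_simp
    linarith [log_le_sub_one_of_pos (show 0 < n * u / m by positivity)]
  calc 2 * log n ≤ 2 * (n * u / m - 1 + L) := by linarith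
    _ ≤ (n * u / 2 - 2) * (20 / m * L) := by
      rw [← sub_nonneg]
      have : (n * u / 2 - 2) * (20 / m * L) - 2 * (n * u / m - 1 + L)
          = ((10 * (n * u) - 40 - 2 * m) * (L - 1) + 8 * (n * u) - 40) / m := by
        field_simp; ring
      rw [this]
      apply div_nonneg _ hm0.le
      nlinarith
    _ < (n * u / 2 - 2) * log c := by gcongr; linarith

theorem mul_sub_one_eq_of_eq_div {n u c : ℝ} (hn : 0 < n) (hnu : 1 < n * u)
    (hc : c = (1 - u + 1 / n) / (u - 1 / n)) : c * (n * u - 1) = n - n * u + 1 := by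
  have : 0 < u - 1 / n := by rw [sub_pos, div_lt_iff₀ hn]; linarith
  rw [hc, div_mul_eq_mul_div, div_eq_iff this.ne']
  field_simp

theorem one_add_two_mul_log_div_log_lt {n u m c : ℝ} (hu : 0 < u) (hu2 : u < 1 / 2)
    (hm : 5 ≤ m) (hmn : m ≤ n * u) (hcs : c * (n * u - 1) = n - n * u + 1)
    (hlog : 20 / m * log (m / u) ≤ log ((1 - u) / u)) :
    1 + 2 * log n / log c < n * u / 2 - 1 := by
  have hn : 0 < n := pos_of_mul_pos_left (by linarith) hu.le
  have hc : 1 < c := by nlinarith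
  -- `c * u = (n - n * u + 1 + c) / n > 1 - u`
  have hlogc : 20 / m * log (m / u) < log c := by
    refine hlog.trans_lt (log_lt_log (div_pos (by linarith) hu) ?_)
    rw [div_lt_iff₀ hu, ← mul_lt_mul_iff_right₀ hn]
    nlinarith
  have := two_mul_log_lt_mul_log hu (by linarith) hm hmn hlogc
  rw [← div_lt_iff₀ (log_pos hc)] at this
  linarith

theorem mul_sqrt_mul_div_sub_one_le {u c ℓ : ℝ} (hu : u ≤ 16 / 25) (hc : 1 < c) (hℓ : 1 ≤ ℓ) :
    5 / 4 * √u * (c / (c - 1)) ≤ 1 + ℓ / log c := by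
  have hc1 : 0 < c - 1 := by linarith
  have hlogc : 0 < log c := log_pos hc
  have hsqrt : 5 / 4 * √u ≤ 1 := by
    have : √u ≤ √((4 / 5) ^ 2) := sqrt_le_sqrt (by linarith)
    rw [sqrt_sq (by norm_num)] at this
    linarith
  calc 5 / 4 * √u * (c / (c - 1)) ≤ c / (c - 1) :=
        mul_le_of_le_one_left (by positivity) hsqrt
    _ = 1 + 1 / (c - 1) := by field_simp; ring
    _ ≤ 1 + ℓ / log c := by
      gcongr 1 + ?_
      calc 1 / (c - 1) ≤ 1 / log c := by
            gcongr; linarith [log_le_sub_one_of_pos (show 0 < c by linarith)]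
        _ ≤ ℓ / log c := by gcongr

theorem div_sq_le_div_mul_sqrt {n u c δ : ℝ} (hn : 3 ≤ n) (hu0 : 0 < u) (hu : u ≤ 16 / 25)
    (hc : 1 < c) (hδ : 1 + 2 * log n / log c ≤ n * δ) :
    5 / 4 * (c / (c - 1)) / n ^ 2 ≤ δ / (n * √u) := by
  have hlogn : 1 ≤ 2 * log n := by
    have : 1 ≤ log n := by rw [le_log_iff_exp_le (by linarith)]; linarith [exp_one_lt_d9]
    linarith
  have := mul_le_mul_of_nonneg_right
    ((mul_sqrt_mul_div_sub_one_le hu hc hlogn).trans hδ) (by linarith : 0 ≤ n)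
  rw [div_le_div_iff₀ (by positivity) (by positivity)]
  linarith

theorem binomial_window_lower_part_small_general
    (u δ : ℝ) (n m : ℕ)
    (hδ0 : 0 ≤ δ) (hu : u < 1 / 2)
    (hm5 : 5 ≤ m) (hmbound : (m : ℝ) ≤ (n : ℝ) * (u - δ))
    (hlog : 20 / (m : ℝ) * Real.log ((m : ℝ) / u) ≤ Real.log ((1 - u) / u))
    (hwin : ⌈(n : ℝ) * (u - δ)⌉ ≤ ⌊(n : ℝ) * u⌋)
    (c α : ℝ)
    (hc : c = (1 - u + 1 / (n : ℝ)) / (u - 1 / (n : ℝ)))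
    (hα : α = 1 / (n : ℝ) + 2 * Real.log n / ((n : ℝ) * Real.log c)) :
    α < u / 2 - 1 / (n : ℝ)
    ∧ (∑ j ∈ (Finset.Icc (0 : ℤ) (n : ℤ)).filter
          (fun j : ℤ => (n : ℝ) * (u - δ) ≤ (j : ℝ) ∧ (j : ℝ) < (n : ℝ) * (u - α)),
        (n.choose j.toNat : ℝ))
      / (∑ j ∈ (Finset.Icc (0 : ℤ) (n : ℤ)).filter
          (fun j : ℤ => (n : ℝ) * (u - δ) ≤ (j : ℝ) ∧ (j : ℝ) ≤ (n : ℝ) * u),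
        (n.choose j.toNat : ℝ))
      ≤ δ / ((n : ℝ) * Real.sqrt u) := by
  have hs : (m : ℝ) ≤ n * u := hmbound.trans (by nlinarith [n.cast_nonneg (α := ℝ)])
  have hm5' : (5 : ℝ) ≤ m := by exact_mod_cast hm5
  have hn : (0 : ℝ) < n := by nlinarith [n.cast_nonneg (α := ℝ)]
  have hu0 : 0 < u := pos_of_mul_pos_right (by linarith) hn.le
  have hcs := mul_sub_one_eq_of_eq_div hn (by linarith) hc
  have hc1 : 1 < c := by nlinarith
  have hnα : n * α = 1 + 2 * log n / log c := by rw [hα]; field_simp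
  have hnα_lt := hnα ▸ one_add_two_mul_log_div_log_lt hu0 hu hm5' hs hcs hlog
  refine ⟨by rw [← mul_lt_mul_iff_right₀ hn]; field_simp at hnα_lt ⊢; linarith, ?_⟩
  rw [sum_filter_Icc_toNat n _ fun k => (n.choose k : ℝ),
    sum_filter_Icc_toNat n _ fun k => (n.choose k : ℝ)]
  simp only [Int.cast_natCast, mul_sub (n : ℝ) u α]
  rcases le_or_gt δ α with hδα | hαδ
  · rw [filter_false_of_mem fun k _ hk => ?_, sum_empty, zero_div]
    · positivity
    · have : (n : ℝ) * δ ≤ n * α := by gcongr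
      linarith [hk.1, hk.2]
  have hβ : c ^ (n * α - 1) = (n : ℝ) ^ 2 := by
    rw [hnα, add_sub_cancel_left, rpow_def_of_pos (by linarith),
      mul_div_cancel₀ _ (log_pos hc1).ne', two_mul, exp_add, exp_log hn, sq]
  have hwin' : (n : ℝ) * (u - δ) ≤ ⌊(n : ℝ) * u⌋₊ := by
    rw [← Int.natCast_floor_eq_floor (by positivity), Int.ceil_le] at hwin
    exact_mod_cast hwin
  refine (sum_filter_choose_div_sum_filter_choose_le (by linarith) (by linarith) hc1 hcs
    (by rw [hnα]; exact le_add_of_nonneg_right (div_nonneg (by positivity) (log_pos hc1).le))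
    (by linarith) hβ hwin').trans ?_
  exact div_sq_le_div_mul_sqrt (by nlinarith) hu0 (by linarith) hc1
    (hnα ▸ (by gcongr : (n : ℝ) * α ≤ n * δ))

/-- **Key intermediate estimate in the proof of Theorem `TheMainFiniteSize`.**
Let `0 ≤ δ < u < 1/2` and `n, m` positive integers with `5 ≤ m ≤ n(u-δ)`,
`(20/m) log(m/u) ≤ log((1-u)/u)` and `⌈n(u-δ)⌉ ≤ ⌊nu⌋`. With
`c = (1 - u + 1/n)/(u - 1/n)` and `α = 1/n + 2 log n/(n log c)`, one has
`α < u/2 - 1/n`, and the fraction of the binomial weight of the window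
`[n(u-δ), nu]` lying below `n(u-α)` is at most `δ/(n√u)`.
(Sums over `j ∈ ℤ` in the indicated real intervals are realized as sums over the
integers `j ∈ [0, n]` satisfying the real inequalities; this loses no terms since
`C(n,j) = 0` outside `[0, n]` and all integers in the intervals lie in `[0, n]`.) -/
theorem binomial_window_lower_part_small
    (u δ : ℝ) (n m : ℕ) (hn : 0 < n) (hm : 0 < m)
    (hδ0 : 0 ≤ δ) (hδu : δ < u) (hu : u < 1 / 2)
    (hm5 : 5 ≤ m) (hmbound : (m : ℝ) ≤ (n : ℝ) * (u - δ))
    (hlog : 20 / (m : ℝ) * Real.log ((m : ℝ) / u) ≤ Real.log ((1 - u) / u))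
    (hwin : ⌈(n : ℝ) * (u - δ)⌉ ≤ ⌊(n : ℝ) * u⌋)
    (c α : ℝ)
    (hc : c = (1 - u + 1 / (n : ℝ)) / (u - 1 / (n : ℝ)))
    (hα : α = 1 / (n : ℝ) + 2 * Real.log n / ((n : ℝ) * Real.log c)) :
    α < u / 2 - 1 / (n : ℝ)
    ∧ (∑ j ∈ (Finset.Icc (0 : ℤ) (n : ℤ)).filter
          (fun j : ℤ => (n : ℝ) * (u - δ) ≤ (j : ℝ) ∧ (j : ℝ) < (n : ℝ) * (u - α)),
        (n.choose j.toNat : ℝ))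
      / (∑ j ∈ (Finset.Icc (0 : ℤ) (n : ℤ)).filter
          (fun j : ℤ => (n : ℝ) * (u - δ) ≤ (j : ℝ) ∧ (j : ℝ) ≤ (n : ℝ) * u),
        (n.choose j.toNat : ℝ))
      ≤ δ / ((n : ℝ) * Real.sqrt u) :=
  binomial_window_lower_part_small_general u δ n m hδ0 hu hm5 hmbound hlog hwin c α hc hα
end
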